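/- arXiv:1901.08029 — 5 statements merged into one kernel-verified Lean document; each statement's English description precedes it below -/
import Mathlib

section
/- Let S be a nonempty finite type, P a row-stochastic matrix on S that is γ-contractive for some γ ∈ [0,1), and d∞ a stationary distribution of P. Then for every probability vector d₁, every vector v : S → ℝ with 0 ≤ v s ≤ 1 for all s, and every natural number M ≥ 1: |(1/M) · ∑_{m=1}^{M} (d₁ ⬝ P^{m−1}) · v − d∞ · v| ≤ 2 / (M · (1 − γ)). In words: the M-round episodic average return is within 2/(M(1−γ)) of the stationary average reward. -/
/-- A probability vector on a finite type: nonnegative entries summing to 1. -/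
def IsProbVec {S : Type*} [Fintype S] (d : S → ℝ) : Prop :=
  (∀ s, 0 ≤ d s) ∧ ∑ s, d s = 1

/-- A row-stochastic matrix: every row is a probability vector. -/
def RowStochastic {S : Type*} [Fintype S] (P : S → S → ℝ) : Prop :=
  ∀ s, IsProbVec (P s)

/-- Row-vector–matrix multiplication: (d ⬝ P) s' = ∑ s, d s · P s s'. -/
def vmul {S : Type*} [Fintype S] (d : S → ℝ) (P : S → S → ℝ) : S → ℝ :=
  fun s' => ∑ s, d s * P s s'

/-- `iter d P m = d ⬝ P^m`. -/
def iter {S : Type*} [Fintype S] (d : S → ℝ) (P : S → S → ℝ) : ℕ → S → ℝ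
  | 0 => d
  | m + 1 => vmul (iter d P m) P

/-- L1 norm of a vector: ‖x‖₁ = ∑ s, |x s|. -/
def l1 {S : Type*} [Fintype S] (x : S → ℝ) : ℝ := ∑ s, |x s|

/-- Dot product x · v = ∑ s, x s · v s. -/
def dot {S : Type*} [Fintype S] (x v : S → ℝ) : ℝ := ∑ s, x s * v s

/-- γ-contractivity: ‖d ⬝ P − d' ⬝ P‖₁ ≤ γ · ‖d − d'‖₁ for all probability vectors d, d'. -/
def Contractive {S : Type*} [Fintype S] (γ : ℝ) (P : S → S → ℝ) : Prop :=
  ∀ d d' : S → ℝ, IsProbVec d → IsProbVec d' →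
    l1 (fun s => vmul d P s - vmul d' P s) ≤ γ * l1 (fun s => d s - d' s)

lemma vmul_prob {S : Type*} [Fintype S] {P : S → S → ℝ} (hP : RowStochastic P)
    {d : S → ℝ} (hd : IsProbVec d) : IsProbVec (vmul d P) := by
  constructor
  · intro s'
    exact Finset.sum_nonneg fun s _ => mul_nonneg (hd.1 s) ((hP s).1 s')
  · unfold vmul
    rw [Finset.sum_comm]
    calc ∑ s : S, ∑ s' : S, d s * P s s' = ∑ s : S, d s * ∑ s', P s s' := by
          simp [Finset.mul_sum]
      _ = 1 := by simp only [(hP _).2]; simpa using hd.2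

lemma iter_prob {S : Type*} [Fintype S] {P : S → S → ℝ} (hP : RowStochastic P)
    {d : S → ℝ} (hd : IsProbVec d) (m : ℕ) : IsProbVec (iter d P m) := by
  induction m with
  | zero => exact hd
  | succ m ih => exact vmul_prob hP ih

lemma l1_bound {S : Type*} [Fintype S] {d d' : S → ℝ}
    (hd : IsProbVec d) (hd' : IsProbVec d') :
    l1 (fun s => d s - d' s) ≤ 2 := by
  unfold l1
  calc ∑ s, |d s - d' s| ≤ ∑ s, (d s + d' s) := by
        apply Finset.sum_le_sum
        intro s _
        rw [abs_sub_le_iff]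
        constructor <;> nlinarith [hd.1 s, hd'.1 s]
    _ = 2 := by rw [Finset.sum_add_distrib, hd.2, hd'.2]; norm_num

lemma iter_l1 {S : Type*} [Fintype S] {P : S → S → ℝ} {γ : ℝ}
    (hP : RowStochastic P) (hc : Contractive γ P) (hγ0 : 0 ≤ γ)
    {dinf : S → ℝ} (hdinf : IsProbVec dinf) (hstat : vmul dinf P = dinf)
    {d₁ : S → ℝ} (hd₁ : IsProbVec d₁) (m : ℕ) :
    l1 (fun s => iter d₁ P m s - dinf s) ≤ γ ^ m * 2 := by
  induction m with
  | zero => simpa [iter] using l1_bound hd₁ hdinf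
  | succ m ih =>
    have h1 : l1 (fun s => iter d₁ P (m+1) s - dinf s)
        ≤ γ * l1 (fun s => iter d₁ P m s - dinf s) := by
      have := hc (iter d₁ P m) dinf (iter_prob hP hd₁ m) hdinf
      simpa [iter, hstat] using this
    calc l1 (fun s => iter d₁ P (m+1) s - dinf s)
        ≤ γ * (γ ^ m * 2) := h1.trans (by nlinarith)
      _ = γ ^ (m+1) * 2 := by ring

lemma dot_diff {S : Type*} [Fintype S] {x y v : S → ℝ}
    (hv : ∀ s, 0 ≤ v s ∧ v s ≤ 1) :
    |dot x v - dot y v| ≤ l1 (fun s => x s - y s) := by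
  unfold dot l1
  rw [← Finset.sum_sub_distrib]
  refine (Finset.abs_sum_le_sum_abs _ _).trans (Finset.sum_le_sum fun s _ => ?_)
  rw [← sub_mul, abs_mul]
  calc |x s - y s| * |v s| ≤ |x s - y s| * 1 := by
        apply mul_le_mul_of_nonneg_left _ (abs_nonneg _)
        rw [abs_le]; constructor <;> nlinarith [(hv s).1, (hv s).2]
    _ = |x s - y s| := mul_one _

/-- the M-round episodic average return
  (1/M) · ∑_{m=1}^{M} (d₁ ⬝ P^{m−1}) · v is within 2/(M(1−γ)) of the stationary
  average reward d∞ · v. -/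
theorem stmt_2 {S : Type*} [Fintype S] [Nonempty S] (P : S → S → ℝ) (γ : ℝ)
    (hγ0 : 0 ≤ γ) (hγ1 : γ < 1) (hP : RowStochastic P) (hc : Contractive γ P)
    (dinf : S → ℝ) (hdinf : IsProbVec dinf) (hstat : vmul dinf P = dinf)
    (d₁ : S → ℝ) (hd₁ : IsProbVec d₁)
    (v : S → ℝ) (hv : ∀ s, 0 ≤ v s ∧ v s ≤ 1)
    (M : ℕ) (hM : 1 ≤ M) :
    |(1 / (M : ℝ)) * (∑ m ∈ Finset.range M, dot (iter d₁ P m) v) - dot dinf v|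
      ≤ 2 / ((M : ℝ) * (1 - γ)) := by
  have hMpos : (0:ℝ) < M := by exact_mod_cast hM
  have key : ∀ m, |dot (iter d₁ P m) v - dot dinf v| ≤ γ ^ m * 2 := fun m =>
    (dot_diff hv).trans (iter_l1 hP hc hγ0 hdinf hstat hd₁ m)
  have hrw : (1 / (M : ℝ)) * (∑ m ∈ Finset.range M, dot (iter d₁ P m) v) - dot dinf v
      = (1 / (M : ℝ)) * ∑ m ∈ Finset.range M, (dot (iter d₁ P m) v - dot dinf v) := by
    rw [Finset.sum_sub_distrib, Finset.sum_const, Finset.card_range, mul_sub]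
    field_simp
    rw [nsmul_eq_mul]
  rw [hrw, abs_mul, abs_of_pos (by positivity : (0:ℝ) < 1 / (M:ℝ))]
  have hsum : |∑ m ∈ Finset.range M, (dot (iter d₁ P m) v - dot dinf v)|
      ≤ ∑ m ∈ Finset.range M, γ ^ m * 2 :=
    (Finset.abs_sum_le_sum_abs _ _).trans (Finset.sum_le_sum fun m _ => key m)
  have hgeom : ∑ m ∈ Finset.range M, γ ^ m * 2 ≤ 2 / (1 - γ) := by
    rw [← Finset.sum_mul, geom_sum_eq hγ1.ne]
    have h2 : (0:ℝ) < 1 - γ := by linarith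
    rw [show (γ ^ M - 1) / (γ - 1) = (1 - γ ^ M) / (1 - γ) by
      rw [← neg_div_neg_eq]; ring_nf]
    rw [div_mul_eq_mul_div, div_le_div_iff₀ h2 h2]
    nlinarith [pow_nonneg hγ0 M]
  calc (1 / (M:ℝ)) * |∑ m ∈ Finset.range M, (dot (iter d₁ P m) v - dot dinf v)|
      ≤ (1 / (M:ℝ)) * (2 / (1 - γ)) := by
        apply mul_le_mul_of_nonneg_left (hsum.trans hgeom) (by positivity)
    _ = 2 / ((M:ℝ) * (1 - γ)) := by field_simp
end

section
/- Let S be a nonempty finite type and let P, P' be row-stochastic matrices on S. Suppose P is γ-contractive for some γ ∈ [0,1), and let d be a stationary distribution of P and d' a stationary distribution of P'. Then ‖d − d'‖₁ ≤ ‖P − P'‖_∞ / (1 − γ), where ‖P − P'‖_∞ = max_s ∑_{s'} |P(s,s') − P'(s,s')|. -/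
/-- Maximum of a real-valued function over a nonempty finite type. -/
noncomputable def fmax {S : Type*} [Fintype S] [Nonempty S] (f : S → ℝ) : ℝ :=
  Finset.univ.sup' Finset.univ_nonempty f

/-- Kernel distance ‖K − K'‖_∞ = max_s ∑_{s'} |K(s,s') − K'(s,s')|. -/
noncomputable def kdist {S : Type*} [Fintype S] [Nonempty S] (K K' : S → S → ℝ) : ℝ :=
  fmax (fun s => ∑ s', |K s s' - K' s s'|)

section

open Finset

variable {S : Type*} [Fintype S]

theorem l1_add_le (x y : S → ℝ) : l1 (fun s => x s + y s) ≤ l1 x + l1 y := by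
  unfold l1
  rw [← sum_add_distrib]
  exact sum_le_sum fun s _ => abs_add_le (x s) (y s)

theorem l1_vmul_sub_vmul_le {d : S → ℝ} (hd : ∀ s, 0 ≤ d s) (P P' : S → S → ℝ) :
    l1 (fun s' => vmul d P s' - vmul d P' s') ≤ ∑ s, d s * ∑ s', |P s s' - P' s s'| := by
  unfold l1 vmul
  calc ∑ s', |∑ s, d s * P s s' - ∑ s, d s * P' s s'|
      ≤ ∑ s', ∑ s, d s * |P s s' - P' s s'| := by
        refine sum_le_sum fun s' _ => ?_
        rw [← sum_sub_distrib]
        refine (abs_sum_le_sum_abs _ _).trans (le_of_eq (sum_congr rfl fun s _ => ?_))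
        rw [← mul_sub, abs_mul, abs_of_nonneg (hd s)]
    _ = ∑ s, d s * ∑ s', |P s s' - P' s s'| := by
        rw [sum_comm]
        simp only [mul_sum]

theorem sum_mul_le_fmax [Nonempty S] {d : S → ℝ} (hd : IsProbVec d) (f : S → ℝ) :
    ∑ s, d s * f s ≤ fmax f :=
  calc ∑ s, d s * f s ≤ ∑ s, d s * fmax f :=
        sum_le_sum fun s _ => mul_le_mul_of_nonneg_left (le_sup' f (mem_univ s)) (hd.1 s)
    _ = fmax f := by rw [← sum_mul, hd.2, one_mul]

theorem l1_vmul_sub_vmul_le_kdist [Nonempty S] {d : S → ℝ} (hd : IsProbVec d)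
    (P P' : S → S → ℝ) : l1 (fun s' => vmul d P s' - vmul d P' s') ≤ kdist P P' :=
  (l1_vmul_sub_vmul_le hd.1 P P').trans (sum_mul_le_fmax hd _)

end

theorem stmt_4_general {S : Type*} [Fintype S] [Nonempty S] (P P' : S → S → ℝ) (γ : ℝ)
    (hγ1 : γ < 1)
    (hc : Contractive γ P)
    (d d' : S → ℝ) (hd : IsProbVec d) (hd' : IsProbVec d')
    (hstat : vmul d P = d) (hstat' : vmul d' P' = d') :
    l1 (fun s => d s - d' s) ≤ kdist P P' / (1 - γ) := by
  have hsplit : (fun s => d s - d' s) =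
      fun s => (vmul d P s - vmul d' P s) + (vmul d' P s - vmul d' P' s) := by
    funext s
    conv_lhs => rw [← hstat, ← hstat']
    ring
  have hbound : l1 (fun s => d s - d' s) ≤ γ * l1 (fun s => d s - d' s) + kdist P P' :=
    calc l1 (fun s => d s - d' s)
        ≤ l1 (fun s => vmul d P s - vmul d' P s) + l1 (fun s => vmul d' P s - vmul d' P' s) := by
          rw [hsplit]
          exact l1_add_le _ _
      _ ≤ γ * l1 (fun s => d s - d' s) + kdist P P' :=
          add_le_add (hc d d' hd hd') (l1_vmul_sub_vmul_le_kdist hd' P P')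
  rw [le_div_iff₀ (sub_pos.mpr hγ1)]
  linarith

/-- stationary distributions of nearby kernels are close,
  ‖d − d'‖₁ ≤ ‖P − P'‖_∞ / (1 − γ). -/
theorem stmt_4 {S : Type*} [Fintype S] [Nonempty S] (P P' : S → S → ℝ) (γ : ℝ)
    (hγ0 : 0 ≤ γ) (hγ1 : γ < 1)
    (hP : RowStochastic P) (hP' : RowStochastic P') (hc : Contractive γ P)
    (d d' : S → ℝ) (hd : IsProbVec d) (hd' : IsProbVec d')
    (hstat : vmul d P = d) (hstat' : vmul d' P' = d') :
    l1 (fun s => d s - d' s) ≤ kdist P P' / (1 - γ) :=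
  stmt_4_general P P' γ hγ1 hc d d' hd hd' hstat hstat'
end

section
/- Let S be a nonempty finite type, P a γ-contractive row-stochastic matrix on S with γ ∈ [0,1), d∞ a stationary distribution of P, and g : S → ℝ with 0 ≤ g s ≤ 1 for all s. Then for each s ∈ S the series h(s) = ∑_{m=0}^{∞} ((e_s ⬝ P^m) · g − d∞ · g) converges absolutely, and max_s |h(s)| ≤ 2/(1 − γ), where e_s denotes the point-mass probability vector at s. -/
/-- The point-mass probability vector at `s`. -/
def pm {S : Type*} [DecidableEq S] (s : S) : S → ℝ := fun s' => if s' = s then 1 else 0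

/-
Contractivity gives ‖e_s ⬝ P^m − d∞‖₁ = ‖e_s ⬝ P^m − d∞ ⬝ P^m‖₁ ≤ γ^m ‖e_s − d∞‖₁ ≤ 2γ^m, and since
|g| ≤ 1 the m-th term of the series is bounded by this L1 distance. Comparison with the geometric
series ∑ 2γ^m = 2/(1 − γ) gives both claims.
-/

section MarkovChain

variable {S : Type*} [Fintype S]

lemma isProbVec_vmul {d : S → ℝ} {P : S → S → ℝ} (hd : IsProbVec d) (hP : RowStochastic P) :
    IsProbVec (vmul d P) := by
  refine ⟨fun s' => Finset.sum_nonneg fun s _ => mul_nonneg (hd.1 s) ((hP s).1 s'), ?_⟩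
  calc ∑ s', vmul d P s' = ∑ s, d s * ∑ s', P s s' := by
        simp only [vmul, Finset.mul_sum]
        exact Finset.sum_comm
    _ = 1 := by simp only [fun s => (hP s).2, mul_one, hd.2]

lemma isProbVec_iter {d : S → ℝ} {P : S → S → ℝ} (hd : IsProbVec d) (hP : RowStochastic P)
    (m : ℕ) : IsProbVec (iter d P m) := by
  induction m with
  | zero => exact hd
  | succ n ih => exact isProbVec_vmul ih hP

lemma iter_of_vmul_eq {d : S → ℝ} {P : S → S → ℝ} (hd : vmul d P = d) (m : ℕ) :
    iter d P m = d := by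
  induction m with
  | zero => rfl
  | succ n ih => rw [iter, ih, hd]

lemma isProbVec_pm [DecidableEq S] (s : S) : IsProbVec (pm s) :=
  ⟨fun s' => by unfold pm; positivity, by simp [pm]⟩

lemma l1_sub_le_two {d d' : S → ℝ} (hd : IsProbVec d) (hd' : IsProbVec d') :
    l1 (fun s => d s - d' s) ≤ 2 := by
  calc l1 (fun s => d s - d' s) ≤ ∑ s, (|d s| + |d' s|) :=
        Finset.sum_le_sum fun s _ => abs_sub _ _
    _ = 2 := by
        simp only [abs_of_nonneg (hd.1 _), abs_of_nonneg (hd'.1 _), Finset.sum_add_distrib,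
          hd.2, hd'.2]
        norm_num

lemma abs_dot_sub_dot_le_l1 {g : S → ℝ} (hg : ∀ s, |g s| ≤ 1) (x y : S → ℝ) :
    |dot x g - dot y g| ≤ l1 (fun s => x s - y s) := by
  calc |dot x g - dot y g| = |∑ s, (x s - y s) * g s| := by
        simp only [dot, sub_mul, Finset.sum_sub_distrib]
    _ ≤ ∑ s, |(x s - y s) * g s| := Finset.abs_sum_le_sum_abs _ _
    _ ≤ l1 (fun s => x s - y s) := Finset.sum_le_sum fun s _ => by
        rw [abs_mul]
        exact mul_le_of_le_one_right (abs_nonneg _) (hg s)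

lemma Contractive.l1_iter_sub_le {γ : ℝ} {P : S → S → ℝ} (hc : Contractive γ P)
    (hP : RowStochastic P) (hγ0 : 0 ≤ γ) {d d' : S → ℝ} (hd : IsProbVec d) (hd' : IsProbVec d')
    (m : ℕ) :
    l1 (fun s => iter d P m s - iter d' P m s) ≤ γ ^ m * l1 (fun s => d s - d' s) := by
  induction m with
  | zero => simp [iter]
  | succ n ih =>
    calc l1 (fun s => iter d P (n + 1) s - iter d' P (n + 1) s)
        ≤ γ * l1 (fun s => iter d P n s - iter d' P n s) :=
          hc _ _ (isProbVec_iter hd hP n) (isProbVec_iter hd' hP n)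
      _ ≤ γ * (γ ^ n * l1 (fun s => d s - d' s)) := mul_le_mul_of_nonneg_left ih hγ0
      _ = γ ^ (n + 1) * l1 (fun s => d s - d' s) := by ring

lemma Contractive.abs_dot_iter_sub_le {γ : ℝ} {P : S → S → ℝ} (hc : Contractive γ P)
    (hP : RowStochastic P) (hγ0 : 0 ≤ γ) {d dinf : S → ℝ} (hd : IsProbVec d)
    (hdinf : IsProbVec dinf) (hstat : vmul dinf P = dinf) {g : S → ℝ} (hg : ∀ s, |g s| ≤ 1)
    (m : ℕ) : |dot (iter d P m) g - dot dinf g| ≤ 2 * γ ^ m := by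
  calc |dot (iter d P m) g - dot dinf g|
      ≤ l1 (fun s => iter d P m s - iter dinf P m s) := by
        rw [iter_of_vmul_eq hstat]
        exact abs_dot_sub_dot_le_l1 hg _ _
    _ ≤ γ ^ m * l1 (fun s => d s - dinf s) := hc.l1_iter_sub_le hP hγ0 hd hdinf m
    _ ≤ γ ^ m * 2 := mul_le_mul_of_nonneg_left (l1_sub_le_two hd hdinf) (pow_nonneg hγ0 m)
    _ = 2 * γ ^ m := mul_comm _ _

end MarkovChain

theorem stmt_6_general {S : Type*} [Fintype S] [DecidableEq S]
    (P : S → S → ℝ) (γ : ℝ) (hγ0 : 0 ≤ γ) (hγ1 : γ < 1)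
    (hP : RowStochastic P) (hc : Contractive γ P)
    (dinf : S → ℝ) (hdinf : IsProbVec dinf) (hstat : vmul dinf P = dinf)
    (g : S → ℝ) (hg : ∀ s, 0 ≤ g s ∧ g s ≤ 1) :
    (∀ s : S, Summable (fun m : ℕ => |dot (iter (pm s) P m) g - dot dinf g|)) ∧
    (∀ s : S, |∑' m : ℕ, (dot (iter (pm s) P m) g - dot dinf g)| ≤ 2 / (1 - γ)) := by
  have hg_abs : ∀ s, |g s| ≤ 1 := fun s => abs_le.mpr ⟨by linarith [(hg s).1], (hg s).2⟩
  have hterm (s : S) (m : ℕ) : |dot (iter (pm s) P m) g - dot dinf g| ≤ 2 * γ ^ m :=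
    hc.abs_dot_iter_sub_le hP hγ0 (isProbVec_pm s) hdinf hstat hg_abs m
  have hgeom : HasSum (fun m : ℕ => 2 * γ ^ m) (2 / (1 - γ)) := by
    simpa only [div_eq_mul_inv] using (hasSum_geometric_of_lt_one hγ0 hγ1).mul_left 2
  exact ⟨fun s => hgeom.summable.of_nonneg_of_le (fun _ => abs_nonneg _) (hterm s),
    fun s => tsum_of_norm_bounded hgeom fun m => (Real.norm_eq_abs _).trans_le (hterm s m)⟩

/-- the bias series h(s) = ∑_{m≥0} ((e_s ⬝ P^m)·g − d∞·g) converges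
absolutely and is bounded in absolute value by 2/(1−γ) at every state. -/
theorem stmt_6 {S : Type*} [Fintype S] [Nonempty S] [DecidableEq S]
    (P : S → S → ℝ) (γ : ℝ) (hγ0 : 0 ≤ γ) (hγ1 : γ < 1)
    (hP : RowStochastic P) (hc : Contractive γ P)
    (dinf : S → ℝ) (hdinf : IsProbVec dinf) (hstat : vmul dinf P = dinf)
    (g : S → ℝ) (hg : ∀ s, 0 ≤ g s ∧ g s ≤ 1) :
    (∀ s : S, Summable (fun m : ℕ => |dot (iter (pm s) P m) g - dot dinf g|)) ∧
    (∀ s : S, |∑' m : ℕ, (dot (iter (pm s) P m) g - dot dinf g)| ≤ 2 / (1 - γ)) :=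
  stmt_6_general P γ hγ0 hγ1 hP hc dinf hdinf hstat g hg
end

section
/- Let α > 0 and c₁, c₂ ≥ 0 be real numbers. For every real T ≥ 1, setting Γ = min{T^{4α/7}, T} (real powers), one has c₁ · T · Γ^{−3/4} + c₂ · T^{−α} · T · Γ ≤ (c₁ + c₂) · T^{max{1 − (3/7)·α, 1/4}}. -/
/-! For `T ≥ 1` the window is itself a power, `Γ = T ^ min (4α/7) 1`, so both terms are
`cᵢ` times a power of `T`; in each of the two regimes of the minimum both exponents are at most
`max (1 - 3α/7) (1/4)`, and `T ^ ·` is monotone. -/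

lemma Real.rpow_min_of_one_le {T : ℝ} (hT : 1 ≤ T) (a b : ℝ) :
    T ^ min a b = min (T ^ a) (T ^ b) :=
  (Real.monotone_rpow_of_base_ge_one hT).map_min

lemma Real.mul_rpow_add_mul_rpow_le {T a b M c₁ c₂ : ℝ} (hT : 1 ≤ T) (hc₁ : 0 ≤ c₁)
    (hc₂ : 0 ≤ c₂) (ha : a ≤ M) (hb : b ≤ M) :
    c₁ * T ^ a + c₂ * T ^ b ≤ (c₁ + c₂) * T ^ M :=
  calc c₁ * T ^ a + c₂ * T ^ b ≤ c₁ * T ^ M + c₂ * T ^ M := by gcongr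
    _ = (c₁ + c₂) * T ^ M := by ring

lemma one_add_min_mul_le_max (α : ℝ) :
    1 + min (4 * α / 7) 1 * (-3 / 4) ≤ max (1 - 3 / 7 * α) (1 / 4) := by
  rcases min_cases (4 * α / 7) 1 with ⟨h, -⟩ | ⟨h, -⟩ <;> rw [h]
  · exact le_max_of_le_left (by linarith)
  · exact le_max_of_le_right (by norm_num)

lemma neg_add_one_add_min_le_max (α : ℝ) :
    -α + 1 + min (4 * α / 7) 1 ≤ max (1 - 3 / 7 * α) (1 / 4) := by
  rcases min_cases (4 * α / 7) 1 with ⟨h, -⟩ | ⟨h, hα⟩ <;> rw [h]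
  · exact le_max_of_le_left (by linarith)
  · exact le_max_of_le_right (by linarith)

theorem stmt_15_general (α c₁ c₂ : ℝ) (hc₁ : 0 ≤ c₁) (hc₂ : 0 ≤ c₂)
    (T : ℝ) (hT : 1 ≤ T) (Γ : ℝ) (hΓ : Γ = min (T ^ (4 * α / 7)) T) :
    c₁ * T * Γ ^ (-(3 : ℝ) / 4) + c₂ * T ^ (-α) * T * Γ ≤
      (c₁ + c₂) * T ^ max (1 - (3 / 7) * α) (1 / 4 : ℝ) := by
  have hT0 : 0 < T := zero_lt_one.trans_le hT
  set m := min (4 * α / 7) (1 : ℝ)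
  have hΓm : Γ = T ^ m := by rw [hΓ, Real.rpow_min_of_one_le hT, Real.rpow_one]
  calc c₁ * T * Γ ^ (-(3 : ℝ) / 4) + c₂ * T ^ (-α) * T * Γ
      = c₁ * T ^ (1 + m * (-3 / 4)) + c₂ * T ^ (-α + 1 + m) := by
        rw [hΓm, ← Real.rpow_mul hT0.le, Real.rpow_add hT0, Real.rpow_add hT0,
          Real.rpow_add hT0, Real.rpow_one]
        ring
    _ ≤ _ := Real.mul_rpow_add_mul_rpow_le hT hc₁ hc₂
        (one_add_min_mul_le_max α) (neg_add_one_add_min_le_max α)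

/-- algebraic core of Theorem 2 of the paper: for α > 0, c₁, c₂ ≥ 0,
T ≥ 1 and Γ = min{T^{4α/7}, T},
c₁·T·Γ^{−3/4} + c₂·T^{−α}·T·Γ ≤ (c₁ + c₂)·T^{max{1 − (3/7)α, 1/4}}. -/
theorem stmt_15 (α c₁ c₂ : ℝ) (hα : 0 < α) (hc₁ : 0 ≤ c₁) (hc₂ : 0 ≤ c₂)
    (T : ℝ) (hT : 1 ≤ T) (Γ : ℝ) (hΓ : Γ = min (T ^ (4 * α / 7)) T) :
    c₁ * T * Γ ^ (-(3 : ℝ) / 4) + c₂ * T ^ (-α) * T * Γ ≤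
      (c₁ + c₂) * T ^ max (1 - (3 / 7) * α) (1 / 4 : ℝ) :=
  stmt_15_general α c₁ c₂ hc₁ hc₂ T hT Γ hΓ
end

section
/- Let Π₁, Π₂ be nonempty sets, η : Π₁ × Π₂ → ℝ, and λ, μ ≥ 0. Suppose (π¹*, π²*) ∈ Π₁ × Π₂ witnesses (λ,μ)-smoothness: for every (π¹, π²) ∈ Π₁ × Π₂, η(π¹*, π²) ≥ λ·η(π¹*, π²*) − μ·η(π¹, π²) and η(π¹*, π²*) ≥ η(π¹, π²). Let T ≥ 1 be a natural number, let π¹_1, …, π¹_T ∈ Π₁ and π²_1, …, π²_T ∈ Π₂, let V_1, …, V_T ∈ ℝ, and let δ ≥ 0, OPT ∈ ℝ, R ∈ ℝ satisfy: (a) |V_t − η(π¹_t, π²_t)| ≤ δ for every t; (b) OPT ≤ η(π¹*, π²*) + δ; (c) ∑_{t=1}^{T} (η(π¹*, π²_t) − η(π¹_t, π²_t)) ≤ R. Then the average return V̄ = (1/T)·∑_{t=1}^{T} V_t satisfies V̄ ≥ (λ/(1+μ))·OPT − R/((1+μ)·T) − (1 + λ/(1+μ))·δ. -/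
/-- Lemma 1 of the paper, abstract form: near-optimality of no-regret
dynamics in a (λ,μ)-smooth MDP. -/
theorem stmt_16 {Pol₁ Pol₂ : Type*} [Nonempty Pol₁] [Nonempty Pol₂]
    (η : Pol₁ → Pol₂ → ℝ) (lam μ : ℝ) (hlam : 0 ≤ lam) (hμ : 0 ≤ μ)
    (πs₁ : Pol₁) (πs₂ : Pol₂)
    (hsmooth₁ : ∀ (π₁ : Pol₁) (π₂ : Pol₂), η πs₁ π₂ ≥ lam * η πs₁ πs₂ - μ * η π₁ π₂)
    (hsmooth₂ : ∀ (π₁ : Pol₁) (π₂ : Pol₂), η πs₁ πs₂ ≥ η π₁ π₂)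
    (T : ℕ) (hT : 1 ≤ T)
    (π₁ : ℕ → Pol₁) (π₂ : ℕ → Pol₂) (V : ℕ → ℝ)
    (δ : ℝ) (hδ : 0 ≤ δ) (OPT R : ℝ)
    (ha : ∀ t ∈ Finset.Icc 1 T, |V t - η (π₁ t) (π₂ t)| ≤ δ)
    (hb : OPT ≤ η πs₁ πs₂ + δ)
    (hc : ∑ t ∈ Finset.Icc 1 T, (η πs₁ (π₂ t) - η (π₁ t) (π₂ t)) ≤ R) :
    (1 / (T : ℝ)) * ∑ t ∈ Finset.Icc 1 T, V t ≥
      (lam / (1 + μ)) * OPT - R / ((1 + μ) * T) - (1 + lam / (1 + μ)) * δ := by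
  have hTpos : (0:ℝ) < T := by exact_mod_cast Nat.lt_of_lt_of_le Nat.zero_lt_one hT
  have hμ1 : (0:ℝ) < 1 + μ := by linarith
  set S := ∑ t ∈ Finset.Icc 1 T, η (π₁ t) (π₂ t) with hS
  have hcard : (Finset.Icc 1 T).card = T := by simp
  -- sum smoothness
  have h1 : (T:ℝ) * (lam * η πs₁ πs₂) - μ * S ≤ ∑ t ∈ Finset.Icc 1 T, η πs₁ (π₂ t) := by
    have := Finset.sum_le_sum (fun t (_ : t ∈ Finset.Icc 1 T) =>
      (hsmooth₁ (π₁ t) (π₂ t) : lam * η πs₁ πs₂ - μ * η (π₁ t) (π₂ t) ≤ η πs₁ (π₂ t)))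
    simpa [Finset.sum_sub_distrib, ← Finset.mul_sum, hcard, hS, mul_comm] using this
  have h2 : ∑ t ∈ Finset.Icc 1 T, η πs₁ (π₂ t) ≤ R + S := by
    have := hc
    rw [Finset.sum_sub_distrib] at this
    linarith
  have hkey : (T:ℝ) * (lam * η πs₁ πs₂) ≤ R + (1 + μ) * S := by nlinarith
  -- ∑ V ≥ S - T δ
  have hV : S - (T:ℝ) * δ ≤ ∑ t ∈ Finset.Icc 1 T, V t := by
    have := Finset.sum_le_sum (fun t ht =>
      (abs_le.mp (ha t ht)).1)
    have h' : ∑ t ∈ Finset.Icc 1 T, (V t - η (π₁ t) (π₂ t)) ≥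
        ∑ t ∈ Finset.Icc 1 T, (-δ) := by
      apply Finset.sum_le_sum
      intro t ht
      exact (abs_le.mp (ha t ht)).1
    rw [Finset.sum_sub_distrib, Finset.sum_const, hcard] at h'
    simp only [nsmul_eq_mul] at h'
    linarith
  -- η* ≥ OPT - δ
  have hb' : lam * OPT - lam * δ ≤ lam * η πs₁ πs₂ := by nlinarith
  -- combine
  have key2 : lam * OPT * T - R - (1 + μ + lam) * δ * T ≤ (1 + μ) * (S - T * δ) := by
    nlinarith [mul_le_mul_of_nonneg_left hb' hTpos.le]
  have eL : lam / (1 + μ) * OPT - R / ((1 + μ) * T) - (1 + lam / (1 + μ)) * δ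
      = (lam * OPT * T - R - (1 + μ + lam) * δ * T) / ((1 + μ) * T) := by
    field_simp
  have e2 : (1 / (T:ℝ)) * (S - T * δ) = ((1 + μ) * (S - T * δ)) / ((1 + μ) * T) := by
    field_simp
  have h4 : lam / (1 + μ) * OPT - R / ((1 + μ) * T) - (1 + lam / (1 + μ)) * δ
      ≤ (1 / (T:ℝ)) * (S - T * δ) := by
    rw [eL, e2]
    exact (div_le_div_iff_of_pos_right (mul_pos hμ1 hTpos)).mpr key2
  have h5 : (1 / (T:ℝ)) * (S - T * δ) ≤ (1 / (T:ℝ)) * ∑ t ∈ Finset.Icc 1 T, V t :=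
    mul_le_mul_of_nonneg_left hV (by positivity)
  linarith
end
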